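/- In the heterogeneous basic game, suppose g(h) = h·χ(h) is concave on (0,∞), and suppose (g(h_{i*−1}) − g(h_{i*}))/(h_{i*−1} − h_{i*}) < V/d where {1,...,i*} is the participating set. Then the expected payoff U_i({1,...,i*}) is strictly decreasing in i on {1,...,i*}: for all i < j ≤ i*, U_i({1,...,i*}) > U_j({1,...,i*}). -/

import Mathlib

open Finset

/-!
Scientist `j` earns less than scientist `i` exactly when the secant slope of `g(h) = h·χ(h)`
between `h_j` and `h_i` is below `V/d`. For a concave `g`, secant slopes decrease as both
endpoints move right, and every pair `h_j < h_i` of participants lies to the right of the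
pair `h_{i*} < h_{i*−1}`, whose slope is below `V/d` by assumption.
-/

/-- Expected payoff of scientist `i` in the heterogeneous basic game (opportunity cost
rate `χ(h_i)`) when the participating set is `I`. Scientists are indexed `0,…,N-1` in
descending order of scientific capital, so the paper's `{1,…,i*}` is `Finset.Iic kstar`
for `kstar = i*-1`. -/
noncomputable def payoff {N : ℕ} (h : Fin N → ℝ) (χ : ℝ → ℝ) (V d F : ℝ)
    (I : Finset (Fin N)) (i : Fin N) : ℝ :=
  V * h i / (∑ j ∈ I, h j) - h i * χ (h i) * d / (∑ j ∈ I, h j) - F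

theorem ConcaveOn.slope_le_slope_of_le {𝕜 : Type*} [Field 𝕜] [LinearOrder 𝕜]
    [IsStrictOrderedRing 𝕜] {s : Set 𝕜} {f : 𝕜 → 𝕜} (hf : ConcaveOn 𝕜 s f) {a b a' b' : 𝕜}
    (ha : a ∈ s) (hb : b ∈ s) (ha' : a' ∈ s) (hb' : b' ∈ s) (hab : a < b) (ha'b' : a' < b')
    (haa' : a ≤ a') (hbb' : b ≤ b') : slope f a' b' ≤ slope f a b :=
  calc slope f a' b' = slope f b' a' := slope_comm f a' b'
    _ ≤ slope f b' a := hf.slope_anti hb' ⟨ha, (hab.trans_le hbb').ne⟩ ⟨ha', ha'b'.ne⟩ haa'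
    _ = slope f a b' := slope_comm f b' a
    _ ≤ slope f a b := hf.slope_anti ha ⟨hb, hab.ne'⟩ ⟨hb', (hab.trans_le hbb').ne'⟩ hbb'

theorem payoff_lt_payoff_of_slope_lt {N : ℕ} {h : Fin N → ℝ} {χ : ℝ → ℝ} {V d F : ℝ}
    {I : Finset (Fin N)} {i j : Fin N} (hI : 0 < ∑ k ∈ I, h k) (hji : h j < h i) (hd : 0 < d)
    (hslope : slope (fun t => t * χ t) (h j) (h i) < V / d) :
    payoff h χ V d F I j < payoff h χ V d F I i := by
  rw [slope_def_field, div_lt_div_iff₀ (sub_pos.mpr hji) hd] at hslope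
  unfold payoff
  rw [div_sub_div_same, div_sub_div_same]
  gcongr ?_ - F
  exact div_lt_div_of_pos_right (by linarith) hI

theorem payoff_strictly_decreasing_general (N : ℕ) (h : Fin N → ℝ) (χ : ℝ → ℝ)
    (hpos : ∀ i, 0 < h i) (hdesc : ∀ i j : Fin N, i < j → h j < h i)
    (hconc : ConcaveOn ℝ (Set.Ioi (0 : ℝ)) (fun t => t * χ t))
    (V d F : ℝ) (hd : 0 < d)
    (kstar kpred : Fin N) (hpred : (kpred : ℕ) + 1 = (kstar : ℕ))
    (hslope : (h kpred * χ (h kpred) - h kstar * χ (h kstar)) / (h kpred - h kstar) < V / d) :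
    ∀ i j : Fin N, i < j → j ≤ kstar →
      payoff h χ V d F (Finset.Iic kstar) j < payoff h χ V d F (Finset.Iic kstar) i := by
  intro i j hij hjk
  have hanti : StrictAnti h := fun a b hab => hdesc a b hab
  have hpred_lt : kpred < kstar := by omega
  have hi_le : i ≤ kpred := by omega
  have hI : 0 < ∑ k ∈ Iic kstar, h k := sum_pos (fun k _ => hpos k) ⟨kstar, mem_Iic.mpr le_rfl⟩
  refine payoff_lt_payoff_of_slope_lt hI (hanti hij) hd ?_
  calc slope (fun t => t * χ t) (h j) (h i)
      ≤ slope (fun t => t * χ t) (h kstar) (h kpred) :=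
        hconc.slope_le_slope_of_le (hpos _) (hpos _) (hpos _) (hpos _) (hanti hpred_lt)
          (hanti hij) (hanti.antitone hjk) (hanti.antitone hi_le)
    _ < V / d := by rwa [slope_def_field]

/-- if `g(h) = h·χ(h)` is concave on `(0,∞)` and the slope of `g` between
`h_{i*−1}` and `h_{i*}` is less than `V/d`, then on the participating set `{1,…,i*}`
(with `i* ≥ 2`) the expected payoff is strictly decreasing in the scientist's index. -/
theorem payoff_strictly_decreasing (N : ℕ) (h : Fin N → ℝ) (χ : ℝ → ℝ)
    (hpos : ∀ i, 0 < h i) (hdesc : ∀ i j : Fin N, i < j → h j < h i)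
    (hχpos : ∀ t : ℝ, 0 < t → 0 < χ t)
    (hconc : ConcaveOn ℝ (Set.Ioi (0 : ℝ)) (fun t => t * χ t))
    (V d F : ℝ) (hV : 0 < V) (hd : 0 < d) (hF : 0 < F)
    (kstar kpred : Fin N) (hpred : (kpred : ℕ) + 1 = (kstar : ℕ))
    (hslope : (h kpred * χ (h kpred) - h kstar * χ (h kstar)) / (h kpred - h kstar) < V / d) :
    ∀ i j : Fin N, i < j → j ≤ kstar →
      payoff h χ V d F (Finset.Iic kstar) j < payoff h χ V d F (Finset.Iic kstar) i :=
  payoff_strictly_decreasing_general N h χ hpos hdesc hconc V d F hd kstar kpred hpred hslope
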